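/- Fix ε = 3^{-k} (k ≥ 2), p = (1/(3ε))((1+ε)/2 + 4ε²/(1+ε)). Define recursively for ω, σ > 0 with ωσ = p and any interval I the weights w_ν(ω,σ,I) as in the paper: w₀(ω,σ,I) = (ω/√p)(u χ_{I₋} + u^{-1} χ_{I₊}) with u = √p+√(p−1), and w_ν(ω,σ,I) = (ω/p)(Σ_{m=0}^{k−2} χ_{I_m^{(1)}} + χ_{I_{k−1}^{(1)}∪I_{k−1}^{(2)}} + (4ε/(1+ε))χ_{I_{k−1}^{(3)}}) + Σ_{m=0}^{k−2} w_{ν−1}(2ω, σ/2, I_m^{(2)}), where I_m is the right subinterval of I of length 3^{-m}|I| and J^{(i)} is the i-th third of J. Then for every ν ≥ 0: (1/|I|)∫_I w_ν(ω,σ,I) = ω and (1/|I|)∫_I w_ν(ω,σ,I)^{-1} = σ. -/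

import Mathlib

open MeasureTheory

/-- `ε = 3^{-k}`. -/
noncomputable def eps (k : ℕ) : ℝ := (3:ℝ) ^ (-(k:ℤ))

/-- `p = (1/(3ε))((1+ε)/2 + 4ε²/(1+ε))`. -/
noncomputable def pp (k : ℕ) : ℝ := (1/(3 * eps k)) * ((1 + eps k)/2 + 4 * (eps k)^2/(1 + eps k))

/-- `u = √p + √(p−1)`, the larger root of `u + 1/u = 2√p`. -/
noncomputable def uu (k : ℕ) : ℝ := Real.sqrt (pp k) + Real.sqrt (pp k - 1)

/-- The recursively defined weights `w_ν(ω, σ, I)` of the paper, on `I = [a, a+h)`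
(the dual parameter `σ` is determined by `ωσ = p` and is omitted).
`W k ν ω a h` equals `w_ν(ω, p/ω, [a, a+h))` and vanishes outside `[a, a+h)`.

For `ν = 0`: `w₀ = (ω/√p)(u χ_{I₋} + u⁻¹ χ_{I₊})`.

For `ν ≥ 1`, with `I_m` the right subinterval of `I` of length `3^{-m}|I|` and `J^{(i)}`
the `i`-th third of `J`:
`w_ν = (ω/p)(Σ_{m=0}^{k-2} χ_{I_m^{(1)}} + χ_{I_{k-1}^{(1)} ∪ I_{k-1}^{(2)}}
+ (4ε/(1+ε)) χ_{I_{k-1}^{(3)}}) + Σ_{m=0}^{k-2} w_{ν-1}(2ω, σ/2, I_m^{(2)})`. -/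
noncomputable def W (k : ℕ) : ℕ → ℝ → ℝ → ℝ → ℝ → ℝ
  | 0, ω, a, h, x =>
      Set.indicator (Set.Ico a (a + h/2)) (fun _ => ω / Real.sqrt (pp k) * uu k) x +
      Set.indicator (Set.Ico (a + h/2) (a + h)) (fun _ => ω / Real.sqrt (pp k) / uu k) x
  | (ν+1), ω, a, h, x =>
      (∑ m ∈ Finset.range (k-1),
        Set.indicator (Set.Ico (a + h - (3:ℝ)^(-(m:ℤ))*h) (a + h - (2/3)*(3:ℝ)^(-(m:ℤ))*h))
          (fun _ => ω / pp k) x) +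
      Set.indicator (Set.Ico (a + h - (3:ℝ)^(1-(k:ℤ))*h) (a + h - (1/3)*(3:ℝ)^(1-(k:ℤ))*h))
        (fun _ => ω / pp k) x +
      Set.indicator (Set.Ico (a + h - (1/3)*(3:ℝ)^(1-(k:ℤ))*h) (a + h))
        (fun _ => (4 * eps k/(1 + eps k)) * (ω / pp k)) x +
      ∑ m ∈ Finset.range (k-1),
        W k ν (2*ω) (a + h - (2/3)*(3:ℝ)^(-(m:ℤ))*h) ((1/3)*(3:ℝ)^(-(m:ℤ))*h) x

/-!
Every `w_ν(ω, σ, I)` is a finite sum of pieces whose supports are pairwise disjoint subsets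
of `I`, so `w_ν` and `w_ν⁻¹` can both be integrated piece by piece. By induction on `ν`,
`∫_I w_ν = ω |I|` and `∫_I w_ν⁻¹ = (p/ω) |I|`. In the inductive step the `m`-th block lives on
`I_m \ I_{m+1}`, of length `2 · 3^{-m} |I| / 3`; summing the geometric series over `m ≤ k - 2` and
adding the pieces on `I_{k-1}`, the identity `3εp = (1+ε)/2 + 4ε²/(1+ε)` defining `p` makes the
first integral come out to `ω |I|`, while the second one comes out to `(p/ω) |I|` for every `p`.
-/

open Function Set

lemma Pi.inv_add_of_disjoint_support {α K : Type*} [DivisionRing K] {f g : α → K}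
    (h : Disjoint (support f) (support g)) :
    (f + g)⁻¹ = f⁻¹ + g⁻¹ := by
  ext x
  by_cases hfx : f x = 0
  · simp [hfx]
  · have hgx : g x = 0 := notMem_support.1 fun hg ↦ h.ne_of_mem hfx hg rfl
    simp [hgx]

structure HasWeightIntegrals {α : Type*} [MeasurableSpace α] (μ : Measure α) (f : α → ℝ)
    (s : Set α) (A B : ℝ) : Prop where
  support_subset : support f ⊆ s
  integrable : Integrable f μ
  integrable_inv : Integrable f⁻¹ μ
  integral_eq : ∫ x, f x ∂μ = A
  integral_inv_eq : ∫ x, f⁻¹ x ∂μ = B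

namespace HasWeightIntegrals

variable {α : Type*} [MeasurableSpace α] {μ : Measure α} {f g : α → ℝ} {s t : Set α}
  {A B A' B' : ℝ}

lemma mono (hf : HasWeightIntegrals μ f s A B) (hst : s ⊆ t) : HasWeightIntegrals μ f t A B :=
  { hf with support_subset := hf.support_subset.trans hst }

lemma zero : HasWeightIntegrals μ 0 ∅ 0 0 where
  support_subset := by simp
  integrable := integrable_zero _ _ _
  integrable_inv := by
    rw [show (0 : α → ℝ)⁻¹ = 0 from funext fun _ ↦ inv_zero]
    exact integrable_zero _ _ _
  integral_eq := integral_zero _ _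
  integral_inv_eq := by simp

lemma indicator_const {c : ℝ} (hs : MeasurableSet s) (hμs : μ s ≠ ⊤) :
    HasWeightIntegrals μ (s.indicator fun _ ↦ c) s (μ.real s * c) (μ.real s * c⁻¹) := by
  have hinv : (s.indicator fun _ ↦ c)⁻¹ = s.indicator fun _ ↦ c⁻¹ := by
    ext x; by_cases hx : x ∈ s <;> simp [hx]
  refine ⟨support_indicator_subset, (integrable_indicator_iff hs).2 (integrableOn_const hμs),
    ?_, integral_indicator_const c hs, ?_⟩
  · rw [hinv]; exact (integrable_indicator_iff hs).2 (integrableOn_const hμs)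
  · rw [hinv, integral_indicator_const _ hs, smul_eq_mul]

lemma add (hf : HasWeightIntegrals μ f s A B) (hg : HasWeightIntegrals μ g t A' B')
    (hst : Disjoint s t) : HasWeightIntegrals μ (f + g) (s ∪ t) (A + A') (B + B') := by
  have hinv : (f + g)⁻¹ = f⁻¹ + g⁻¹ :=
    Pi.inv_add_of_disjoint_support (hst.mono hf.support_subset hg.support_subset)
  refine ⟨(support_add f g).trans (union_subset_union hf.support_subset hg.support_subset),
    hf.integrable.add hg.integrable, ?_, ?_, ?_⟩
  · rw [hinv]; exact hf.integrable_inv.add hg.integrable_inv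
  · rw [Pi.add_def, integral_add hf.integrable hg.integrable, hf.integral_eq, hg.integral_eq]
  · rw [hinv, Pi.add_def, integral_add hf.integrable_inv hg.integrable_inv, hf.integral_inv_eq,
      hg.integral_inv_eq]

lemma sum {ι : Type*} {I : Finset ι} {f : ι → α → ℝ} {S : ι → Set α} {A B : ι → ℝ}
    (hf : ∀ i ∈ I, HasWeightIntegrals μ (f i) (S i) (A i) (B i))
    (hS : (I : Set ι).PairwiseDisjoint S) :
    HasWeightIntegrals μ (∑ i ∈ I, f i) (⋃ i ∈ I, S i) (∑ i ∈ I, A i) (∑ i ∈ I, B i) := by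
  classical
  induction I using Finset.induction_on with
  | empty => simpa using (zero : HasWeightIntegrals μ 0 ∅ 0 0)
  | insert i I hi ih =>
    rw [Finset.coe_insert, pairwiseDisjoint_insert] at hS
    have hdisj : Disjoint (S i) (⋃ j ∈ I, S j) :=
      disjoint_iUnion₂_right.2 fun j hj ↦ hS.2 j hj (ne_of_mem_of_not_mem hj hi).symm
    simpa only [Finset.sum_insert hi, Finset.set_biUnion_insert] using
      (hf i (I.mem_insert_self i)).add (ih (fun j hj ↦ hf j (Finset.mem_insert_of_mem hj)) hS.1)
        hdisj

lemma indicator_Ico {l r c : ℝ} (hlr : l ≤ r) :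
    HasWeightIntegrals volume ((Ico l r).indicator fun _ ↦ c) (Ico l r)
      ((r - l) * c) ((r - l) * c⁻¹) := by
  simpa only [Real.volume_real_Ico_of_le hlr] using indicator_const (μ := (volume : Measure ℝ))
    (s := Ico l r) (c := c) measurableSet_Ico measure_Ico_lt_top.ne

lemma indicator_Ico_add {l m r c : ℝ} {f : ℝ → ℝ} (hlm : l ≤ m) (hmr : m ≤ r)
    (hf : HasWeightIntegrals volume f (Ico m r) A B) :
    HasWeightIntegrals volume ((Ico l m).indicator (fun _ ↦ c) + f) (Ico l r)
      ((m - l) * c + A) ((m - l) * c⁻¹ + B) := by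
  simpa only [Ico_union_Ico_eq_Ico hlm hmr] using (indicator_Ico hlm).add hf Ico_disjoint_Ico_same

lemma setIntegral_eq (hf : HasWeightIntegrals μ f s A B) : ∫ x in s, f x ∂μ = A :=
  (setIntegral_eq_integral_of_forall_compl_eq_zero fun _ hx ↦
    notMem_support.1 fun h ↦ hx (hf.support_subset h)).trans hf.integral_eq

lemma setIntegral_inv_eq (hf : HasWeightIntegrals μ f s A B) : ∫ x in s, (f x)⁻¹ ∂μ = B :=
  (setIntegral_eq_integral_of_forall_compl_eq_zero fun _ hx ↦
    notMem_support.1 fun h ↦ hx (hf.support_subset ((support_inv' f).subset h))).trans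
      hf.integral_inv_eq

end HasWeightIntegrals

lemma eps_pos (k : ℕ) : 0 < eps k := by
  unfold eps; positivity

lemma three_zpow_neg_sub_one {k : ℕ} (hk : 1 ≤ k) :
    (3 : ℝ) ^ (-((k - 1 : ℕ) : ℤ)) = 3 * eps k := by
  rw [eps, Nat.cast_sub hk, neg_sub, zpow_sub₀ three_ne_zero, zpow_neg, Nat.cast_one, zpow_one]
  ring

lemma three_zpow_one_sub (k : ℕ) : (3 : ℝ) ^ (1 - (k : ℤ)) = 3 * eps k := by
  rw [eps, sub_eq_add_neg, zpow_add₀ three_ne_zero, zpow_one]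

lemma six_mul_eps_mul_pp (k : ℕ) :
    6 * eps k * (1 + eps k) * pp k = (1 + eps k) ^ 2 + 8 * eps k ^ 2 := by
  have := eps_pos k
  rw [pp]; field_simp; ring

lemma three_mul_eps_le_one {k : ℕ} (hk : 1 ≤ k) : 3 * eps k ≤ 1 := by
  rw [← three_zpow_neg_sub_one hk]
  exact zpow_le_one_of_nonpos₀ (by norm_num) (by omega)

lemma one_le_pp {k : ℕ} (hk : 1 ≤ k) : 1 ≤ pp k := by
  have hε := eps_pos k
  have hε3 := three_mul_eps_le_one hk
  have key : 6 * eps k * (1 + eps k) * (pp k - 1) = (1 - eps k) * (1 - 3 * eps k) := by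
    linear_combination six_mul_eps_mul_pp k
  have hprod : 0 ≤ 6 * eps k * (1 + eps k) * (pp k - 1) :=
    key ▸ mul_nonneg (by linarith) (by linarith)
  exact sub_nonneg.1 (nonneg_of_mul_nonneg_right hprod (by positivity))

lemma uu_add_inv {k : ℕ} (hk : 1 ≤ k) : uu k + (uu k)⁻¹ = 2 * √(pp k) := by
  have hp := one_le_pp hk
  have hinv : (uu k)⁻¹ = √(pp k) - √(pp k - 1) := by
    refine inv_eq_of_mul_eq_one_right ?_
    rw [uu, ← sq_sub_sq, Real.sq_sqrt (by linarith), Real.sq_sqrt (by linarith)]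
    ring
  rw [hinv, uu]; ring

lemma sum_three_zpow_neg {k : ℕ} (hk : 1 ≤ k) :
    ∑ m ∈ Finset.range (k - 1), (3 : ℝ) ^ (-(m : ℤ)) = 3 / 2 * (1 - 3 * eps k) := by
  simp only [zpow_neg, zpow_natCast, ← inv_pow]
  rw [geom_sum_eq (by norm_num), inv_pow, ← zpow_natCast, ← zpow_neg, three_zpow_neg_sub_one hk]
  ring

lemma hasWeightIntegrals_W_zero {k : ℕ} (hk : 1 ≤ k) (ω a h : ℝ) (hh : 0 ≤ h) :
    HasWeightIntegrals volume (W k 0 ω a h) (Ico a (a + h)) (ω * h) (pp k / ω * h) := by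
  have hsqrt : √(pp k) ≠ 0 := (Real.sqrt_pos.2 (by linarith [one_le_pp hk])).ne'
  have hsq : √(pp k) * √(pp k) = pp k := Real.mul_self_sqrt (by linarith [one_le_pp hk])
  have hu := uu_add_inv hk
  have H := (HasWeightIntegrals.indicator_Ico (c := ω / √(pp k) / uu k)
    (l := a + h / 2) (r := a + h) (by linarith)).indicator_Ico_add
      (c := ω / √(pp k) * uu k) (l := a) (by linarith) (by linarith)
  convert H using 1
  · rfl
  · calc ω * h = ω / √(pp k) * (uu k + (uu k)⁻¹) * (h / 2) := by
          rw [hu]; field_simp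
      _ = _ := by ring
  · calc pp k / ω * h = √(pp k) / ω * (uu k + (uu k)⁻¹) * (h / 2) := by
          rw [hu]; linear_combination (-(h / ω)) * hsq
      _ = _ := by simp only [div_eq_mul_inv, mul_inv, inv_inv]; ring

-- `W.block k ν ω a h m = (ω/p) χ_{I_m^{(1)}} + w_{ν-1}(2ω, σ/2, I_m^{(2)})`, and `W.tail` is the
-- part of `w_ν` supported on `I_{k-1}`.
noncomputable def W.block (k ν : ℕ) (ω a h : ℝ) (m : ℕ) : ℝ → ℝ :=
  (Ico (a + h - (3:ℝ) ^ (-(m:ℤ)) * h) (a + h - (2/3) * (3:ℝ) ^ (-(m:ℤ)) * h)).indicator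
      (fun _ ↦ ω / pp k) +
    W k ν (2 * ω) (a + h - (2/3) * (3:ℝ) ^ (-(m:ℤ)) * h) ((1/3) * (3:ℝ) ^ (-(m:ℤ)) * h)

noncomputable def W.tail (k : ℕ) (ω a h : ℝ) : ℝ → ℝ :=
  (Ico (a + h - (3:ℝ) ^ (1 - (k:ℤ)) * h) (a + h - (1/3) * (3:ℝ) ^ (1 - (k:ℤ)) * h)).indicator
      (fun _ ↦ ω / pp k) +
    (Ico (a + h - (1/3) * (3:ℝ) ^ (1 - (k:ℤ)) * h) (a + h)).indicator
      (fun _ ↦ 4 * eps k / (1 + eps k) * (ω / pp k))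

lemma W_succ_eq (k ν : ℕ) (ω a h : ℝ) :
    W k (ν + 1) ω a h = ∑ m ∈ Finset.range (k - 1), W.block k ν ω a h m + W.tail k ω a h := by
  ext x
  simp only [W, W.block, W.tail, Pi.add_apply, Finset.sum_apply, Finset.sum_add_distrib]
  ring

lemma three_zpow_neg_succ (m : ℕ) : (3:ℝ) ^ (-((m + 1 : ℕ) : ℤ)) = 3 ^ (-(m:ℤ)) / 3 := by
  rw [Nat.cast_succ, neg_add, zpow_add₀ three_ne_zero, zpow_neg_one, div_eq_mul_inv]

section Step

variable {k ν : ℕ} {ω a h : ℝ}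

lemma hasWeightIntegrals_W_block (hh : 0 ≤ h) (m : ℕ)
    (ih : ∀ a h, 0 ≤ h → HasWeightIntegrals volume (W k ν (2 * ω) a h) (Ico a (a + h))
      (2 * ω * h) (pp k / (2 * ω) * h)) :
    HasWeightIntegrals volume (W.block k ν ω a h m)
      (Ico (a + h - (3:ℝ) ^ (-(m:ℤ)) * h) (a + h - (3:ℝ) ^ (-((m + 1 : ℕ) : ℤ)) * h))
      ((3:ℝ) ^ (-(m:ℤ)) * ((ω / pp k + 2 * ω) * (h / 3)))
      ((3:ℝ) ^ (-(m:ℤ)) * ((pp k / ω + pp k / (2 * ω)) * (h / 3))) := by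
  have hq : 0 ≤ (3:ℝ) ^ (-(m:ℤ)) * h := by positivity
  have H := (ih (a + h - (2/3) * (3:ℝ) ^ (-(m:ℤ)) * h) ((1/3) * (3:ℝ) ^ (-(m:ℤ)) * h)
    (by positivity)).indicator_Ico_add (c := ω / pp k) (l := a + h - (3:ℝ) ^ (-(m:ℤ)) * h)
      (by linarith) (by linarith)
  convert H using 2
  · rfl
  · rw [three_zpow_neg_succ]; ring
  · ring
  · simp only [div_eq_mul_inv, mul_inv, inv_inv]; ring

lemma hasWeightIntegrals_W_blocks (hk : 1 ≤ k) (hh : 0 ≤ h)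
    (ih : ∀ a h, 0 ≤ h → HasWeightIntegrals volume (W k ν (2 * ω) a h) (Ico a (a + h))
      (2 * ω * h) (pp k / (2 * ω) * h)) :
    HasWeightIntegrals volume (∑ m ∈ Finset.range (k - 1), W.block k ν ω a h m)
      (Ico a (a + h - (3:ℝ) ^ (1 - (k:ℤ)) * h))
      ((ω / pp k + 2 * ω) * (h / 2) * (1 - 3 * eps k))
      ((pp k / ω + pp k / (2 * ω)) * (h / 2) * (1 - 3 * eps k)) := by
  set t : ℕ → ℝ := fun m ↦ a + h - (3:ℝ) ^ (-(m:ℤ)) * h with ht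
  have ht_mono : Monotone t := fun m n hmn ↦ by
    have : (3:ℝ) ^ (-(n:ℤ)) ≤ 3 ^ (-(m:ℤ)) := zpow_le_zpow_right₀ (by norm_num) (by omega)
    simp only [ht]; nlinarith
  have ht0 : t 0 = a := by simp [ht]
  have htK : t (k - 1) = a + h - (3:ℝ) ^ (1 - (k:ℤ)) * h := by
    simp only [ht, three_zpow_neg_sub_one hk, three_zpow_one_sub]
  have hunion : ⋃ m ∈ Finset.range (k - 1), Ico (t m) (t (m + 1)) ⊆ Ico a (t (k - 1)) :=
    iUnion₂_subset fun m hm ↦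
      Ico_subset_Ico (ht0 ▸ ht_mono m.zero_le) (ht_mono (Finset.mem_range.1 hm))
  have H := HasWeightIntegrals.sum (I := Finset.range (k - 1))
    (S := fun m ↦ Ico (t m) (t (m + 1))) (fun m _ ↦ hasWeightIntegrals_W_block hh m ih)
    (fun _ _ _ _ hij ↦ ht_mono.pairwise_disjoint_on_Ico_succ hij)
  have H' := H.mono hunion
  rw [← Finset.sum_mul, ← Finset.sum_mul, sum_three_zpow_neg hk, htK] at H'
  convert H' using 1
  · rfl
  · ring
  · ring

lemma hasWeightIntegrals_W_tail (hh : 0 ≤ h) :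
    HasWeightIntegrals volume (W.tail k ω a h) (Ico (a + h - (3:ℝ) ^ (1 - (k:ℤ)) * h) (a + h))
      (ω / pp k * (2 + 4 * eps k / (1 + eps k)) * (eps k * h))
      (pp k / ω * (2 + (1 + eps k) / (4 * eps k)) * (eps k * h)) := by
  have hεh : 0 ≤ eps k * h := mul_nonneg (eps_pos k).le hh
  have H := (HasWeightIntegrals.indicator_Ico (c := 4 * eps k / (1 + eps k) * (ω / pp k))
    (l := a + h - (1/3) * (3:ℝ) ^ (1 - (k:ℤ)) * h) (r := a + h) ?_).indicator_Ico_add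
      (c := ω / pp k) (l := a + h - (3:ℝ) ^ (1 - (k:ℤ)) * h) ?_ ?_
  · convert H using 1
    · rfl
    · rw [three_zpow_one_sub]; ring
    · rw [three_zpow_one_sub]; simp only [div_eq_mul_inv, mul_inv, inv_inv]; ring
  all_goals rw [three_zpow_one_sub]; linarith

lemma hasWeightIntegrals_W_succ (hk : 1 ≤ k) (hh : 0 ≤ h)
    (ih : ∀ a h, 0 ≤ h → HasWeightIntegrals volume (W k ν (2 * ω) a h) (Ico a (a + h))
      (2 * ω * h) (pp k / (2 * ω) * h)) :
    HasWeightIntegrals volume (W k (ν + 1) ω a h) (Ico a (a + h)) (ω * h) (pp k / ω * h) := by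
  have hε := eps_pos k
  have hε3 := three_mul_eps_le_one hk
  have hp0 : pp k ≠ 0 := by linarith [one_le_pp hk]
  have H := (hasWeightIntegrals_W_blocks (a := a) hk hh ih).add
    (hasWeightIntegrals_W_tail (ω := ω) hh) Ico_disjoint_Ico_same
  rw [three_zpow_one_sub, Ico_union_Ico_eq_Ico (by nlinarith) (by nlinarith), ← W_succ_eq] at H
  convert H using 1
  · field_simp
    linear_combination (ω * h) * six_mul_eps_mul_pp k
  · simp only [div_eq_mul_inv, mul_inv]
    field_simp
    ring

end Step

lemma hasWeightIntegrals_W {k : ℕ} (hk : 1 ≤ k) (ν : ℕ) (ω a h : ℝ) (hh : 0 ≤ h) :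
    HasWeightIntegrals volume (W k ν ω a h) (Ico a (a + h)) (ω * h) (pp k / ω * h) := by
  induction ν generalizing ω a h with
  | zero => exact hasWeightIntegrals_W_zero hk ω a h hh
  | succ ν ih => exact hasWeightIntegrals_W_succ hk hh (ih (2 * ω))

theorem W_averages_general (k : ℕ) (hk : 2 ≤ k) (ω σ a h : ℝ)
    (hωσ : ω * σ = pp k) (hh : 0 < h) (ν : ℕ) :
    (1/h) * ∫ x in Set.Ico a (a + h), W k ν ω a h x = ω ∧
    (1/h) * ∫ x in Set.Ico a (a + h), (W k ν ω a h x)⁻¹ = σ := by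
  have hk1 : 1 ≤ k := by omega
  have H := hasWeightIntegrals_W hk1 ν ω a h hh.le
  have hω : ω ≠ 0 := by
    rintro rfl
    linarith [one_le_pp hk1]
  rw [H.setIntegral_eq, H.setIntegral_inv_eq, ← hωσ]
  constructor <;> field_simp

/-- For every `ν ≥ 0`, `(1/|I|)∫_I w_ν(ω,σ,I) = ω` and `(1/|I|)∫_I w_ν(ω,σ,I)⁻¹ = σ`. -/
theorem W_averages (k : ℕ) (hk : 2 ≤ k) (ω σ a h : ℝ) (hω : 0 < ω) (hσ : 0 < σ)
    (hωσ : ω * σ = pp k) (hh : 0 < h) (ν : ℕ) :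
    (1/h) * ∫ x in Set.Ico a (a + h), W k ν ω a h x = ω ∧
    (1/h) * ∫ x in Set.Ico a (a + h), (W k ν ω a h x)⁻¹ = σ :=
  W_averages_general k hk ω σ a h hωσ hh ν
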